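/- Let V be a real vector space equipped with two inner products ⟨·,·⟩ (norm ‖·‖) and ⟨·,·⟩_V (norm ‖·‖_V). Let N ≥ 1 be an integer, Δt > 0, and let θ, θ₊, θ₋ be constants with 0 < θ₋ ≤ θ₊ < θ. For each n ∈ {1, …, N} let A_n : V × V → ℝ be a bilinear form with A_n(v,v) ≥ θ‖v‖_V² for all v, let B_n : V × V → ℝ be a bilinear form with |B_n(w,v)| ≤ θ₊‖w‖_V‖v‖_V for all w, v, and let ℓ_n : V → ℝ be a linear functional with |ℓ_n(v)| ≤ F_n‖v‖_V for all v, where F_n ≥ 0. Suppose u⁰, u¹, …, u^N ∈ V satisfy, for every n ∈ {0, …, N−1} and every v ∈ V, (1/Δt)⟨u^{n+1} − u^n, v⟩ + A_{n+1}(u^{n+1}, v) + B_{n+1}(u^n, v) = ℓ_{n+1}(v). Then ‖u^N‖² + θ₋ Δt ‖u^N‖_V² + (θ − θ₊) Δt ∑_{n=1}^{N} ‖u^n‖_V² ≤ (Δt/(θ − θ₊)) ∑_{n=1}^{N} F_n² + θ₊ Δt ‖u⁰‖_V² + ‖u⁰‖². -/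

import Mathlib

/-!
Testing the scheme at step `n` with `v = uⁿ⁺¹` and using `2⟪x - y, x⟫ ≥ ‖x‖² - ‖y‖²`, the
coercivity of `Aₙ₊₁`, the bound `|Bₙ₊₁(uⁿ, uⁿ⁺¹)| ≤ θ₊ (‖uⁿ‖_V² + ‖uⁿ⁺¹‖_V²) / 2` and Young's
inequality `Fₙ₊₁ ‖uⁿ⁺¹‖_V ≤ Fₙ₊₁² / (2(θ - θ₊)) + (θ - θ₊) ‖uⁿ⁺¹‖_V² / 2` shows that the energy
`‖uⁿ‖² + θ₊ Δt ‖uⁿ‖_V²` decreases by at least `(θ - θ₊) Δt ‖uⁿ⁺¹‖_V² - Δt Fₙ₊₁² / (θ - θ₊)`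
per step. Summing over the steps gives the bound, with `θ₋ ≤ θ₊` at the final time.
-/

open scoped RealInnerProductSpace

open Finset

lemma norm_sq_sub_norm_sq_le_two_mul_inner_sub_left {E : Type*} [NormedAddCommGroup E]
    [InnerProductSpace ℝ E] (x y : E) : ‖x‖ ^ 2 - ‖y‖ ^ 2 ≤ 2 * ⟪x - y, x⟫ := by
  have hxy := norm_sub_sq_real x y
  rw [inner_sub_left, real_inner_self_eq_norm_sq, real_inner_comm]
  linarith [sq_nonneg ‖x - y‖]

lemma mul_le_sq_div_add_mul_sq {δ : ℝ} (hδ : 0 < δ) (c a : ℝ) :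
    c * a ≤ c ^ 2 / (2 * δ) + δ / 2 * a ^ 2 := by
  have hgap : c ^ 2 / (2 * δ) + δ / 2 * a ^ 2 - c * a = (c - δ * a) ^ 2 / (2 * δ) := by
    field_simp
    ring
  have : 0 ≤ (c - δ * a) ^ 2 / (2 * δ) := by positivity
  linarith

/-- One step of the scheme tested with `v = x`, where `x` is the new and `y` the old iterate;
`a`, `b`, `f` stand for `Aₙ₊₁(x, x)`, `Bₙ₊₁(y, x)`, `ℓₙ₊₁(x)` and `nx`, `ny` for `‖x‖_V`, `‖y‖_V`. -/
lemma energy_step {E : Type*} [NormedAddCommGroup E] [InnerProductSpace ℝ E]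
    {Δt θ θp F a b f nx ny : ℝ} (hΔt : 0 < Δt) (hθp : 0 ≤ θp) (hθpθ : θp < θ) {x y : E}
    (ha : θ * nx ^ 2 ≤ a) (hb : |b| ≤ θp * ny * nx) (hf : |f| ≤ F * nx)
    (hstep : (1 / Δt) * ⟪x - y, x⟫ + a + b = f) :
    ‖x‖ ^ 2 + θp * Δt * nx ^ 2 + (θ - θp) * Δt * nx ^ 2
      ≤ ‖y‖ ^ 2 + θp * Δt * ny ^ 2 + Δt / (θ - θp) * F ^ 2 := by
  have hδ : 0 < θ - θp := sub_pos.2 hθpθ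
  have hinner : ⟪x - y, x⟫ = Δt * (f - a - b) := by
    field_simp at hstep
    linarith
  have hkin := norm_sq_sub_norm_sq_le_two_mul_inner_sub_left x y
  have hb' : -b ≤ θp / 2 * (ny ^ 2 + nx ^ 2) := by
    nlinarith [neg_abs_le b, two_mul_le_add_sq ny nx]
  have hf' : f ≤ F ^ 2 / (2 * (θ - θp)) + (θ - θp) / 2 * nx ^ 2 :=
    (le_abs_self f).trans (hf.trans (mul_le_sq_div_add_mul_sq hδ F nx))
  have hrhs : f - a - b ≤ F ^ 2 / (2 * (θ - θp)) - θ / 2 * nx ^ 2 + θp / 2 * ny ^ 2 := by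
    linarith
  have hscaled := mul_le_mul_of_nonneg_left hrhs hΔt.le
  have hF : Δt / (θ - θp) * F ^ 2 = 2 * (Δt * (F ^ 2 / (2 * (θ - θp)))) := by
    field_simp
  linarith

lemma add_sum_Icc_le_of_succ_le {e d g : ℕ → ℝ} {N : ℕ}
    (h : ∀ n < N, e (n + 1) + d (n + 1) ≤ e n + g (n + 1)) :
    e N + ∑ n ∈ Icc 1 N, d n ≤ e 0 + ∑ n ∈ Icc 1 N, g n := by
  induction N with
  | zero => simp
  | succ k ih =>
    have hk := ih fun n hn => h n (by omega)
    rw [sum_Icc_succ_top (by omega), sum_Icc_succ_top (by omega)]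
    linarith [h k (by omega)]

theorem stmt2_general
    {V : Type*} [NormedAddCommGroup V] [InnerProductSpace ℝ V]
    (nV : V → ℝ)
    (N : ℕ) (Δt θ θp θm : ℝ)
    (hΔt : 0 < Δt) (hθm : 0 < θm) (hθmp : θm ≤ θp) (hθpθ : θp < θ)
    (A B : ℕ → V →ₗ[ℝ] V →ₗ[ℝ] ℝ) (l : ℕ → V →ₗ[ℝ] ℝ) (F : ℕ → ℝ)
    (hA : ∀ n, 1 ≤ n → n ≤ N → ∀ v : V, θ * nV v ^ 2 ≤ A n v v)
    (hB : ∀ n, 1 ≤ n → n ≤ N → ∀ w v : V, |(B n w v)| ≤ θp * nV w * nV v)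
    (hl : ∀ n, 1 ≤ n → n ≤ N → ∀ v : V, |(l n v)| ≤ F n * nV v)
    (u : ℕ → V)
    (hscheme : ∀ n, n < N → ∀ v : V,
      (1 / Δt) * ⟪u (n + 1) - u n, v⟫ + A (n + 1) (u (n + 1)) v + B (n + 1) (u n) v
        = l (n + 1) v) :
    ‖u N‖ ^ 2 + θm * Δt * nV (u N) ^ 2
        + (θ - θp) * Δt * ∑ n ∈ Finset.Icc 1 N, nV (u n) ^ 2
      ≤ (Δt / (θ - θp)) * ∑ n ∈ Finset.Icc 1 N, F n ^ 2
        + θp * Δt * nV (u 0) ^ 2 + ‖u 0‖ ^ 2 := by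
  have htel := add_sum_Icc_le_of_succ_le
    (e := fun n => ‖u n‖ ^ 2 + θp * Δt * nV (u n) ^ 2)
    (d := fun n => (θ - θp) * Δt * nV (u n) ^ 2) (g := fun n => Δt / (θ - θp) * F n ^ 2)
    fun n hn => energy_step hΔt (hθm.le.trans hθmp) hθpθ
      (hA (n + 1) (by omega) (by omega) _) (hB (n + 1) (by omega) (by omega) _ _)
      (hl (n + 1) (by omega) (by omega) _) (hscheme n hn _)
  rw [← mul_sum, ← mul_sum] at htel
  have hfinal : θm * Δt * nV (u N) ^ 2 ≤ θp * Δt * nV (u N) ^ 2 := by gcongr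
  linarith

/-- Stability of the ensemble time-stepping scheme (Theorem 3.1) in abstract form. -/
theorem stmt2
    {V : Type*} [NormedAddCommGroup V] [InnerProductSpace ℝ V]
    -- second inner product ⟨·,·⟩_V on V with induced norm nV = ‖·‖_V
    (ipV : V → V → ℝ)
    (hipV_symm : ∀ u v : V, ipV u v = ipV v u)
    (hipV_add : ∀ u v w : V, ipV (u + v) w = ipV u w + ipV v w)
    (hipV_smul : ∀ (c : ℝ) (u v : V), ipV (c • u) v = c * ipV u v)
    (hipV_posdef : ∀ u : V, u ≠ 0 → 0 < ipV u u)
    (nV : V → ℝ) (hnV : ∀ v : V, nV v = Real.sqrt (ipV v v))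
    (N : ℕ) (hN : 1 ≤ N) (Δt θ θp θm : ℝ)
    (hΔt : 0 < Δt) (hθm : 0 < θm) (hθmp : θm ≤ θp) (hθpθ : θp < θ)
    (A B : ℕ → V →ₗ[ℝ] V →ₗ[ℝ] ℝ) (l : ℕ → V →ₗ[ℝ] ℝ) (F : ℕ → ℝ)
    (hA : ∀ n, 1 ≤ n → n ≤ N → ∀ v : V, θ * nV v ^ 2 ≤ A n v v)
    (hB : ∀ n, 1 ≤ n → n ≤ N → ∀ w v : V, |(B n w v)| ≤ θp * nV w * nV v)
    (hF : ∀ n, 1 ≤ n → n ≤ N → 0 ≤ F n)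
    (hl : ∀ n, 1 ≤ n → n ≤ N → ∀ v : V, |(l n v)| ≤ F n * nV v)
    (u : ℕ → V)
    (hscheme : ∀ n, n < N → ∀ v : V,
      (1 / Δt) * ⟪u (n + 1) - u n, v⟫ + A (n + 1) (u (n + 1)) v + B (n + 1) (u n) v
        = l (n + 1) v) :
    ‖u N‖ ^ 2 + θm * Δt * nV (u N) ^ 2
        + (θ - θp) * Δt * ∑ n ∈ Finset.Icc 1 N, nV (u n) ^ 2
      ≤ (Δt / (θ - θp)) * ∑ n ∈ Finset.Icc 1 N, F n ^ 2
        + θp * Δt * nV (u 0) ^ 2 + ‖u 0‖ ^ 2 :=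
  stmt2_general nV N Δt θ θp θm hΔt hθm hθmp hθpθ A B l F hA hB hl u hscheme
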